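/- Let Γ be a finite set of ground term equations. Every ∼_Γ-congruence class of ground terms is infinite if and only if every constant symbol of Σ is of cyclic type. -/

import Mathlib

namespace AFA

open Classical

/-- A functional signature: operation symbols with arities. Constants are arity-0 symbols. -/
structure Sig where
  Op : Type
  arity : Op → ℕ

/-- Ground terms over a signature. -/
inductive Tm (S : Sig) : Type
  | node (f : S.Op) (args : Fin (S.arity f) → Tm S) : Tm S

/-- The ground term given by a constant symbol. -/
def constTm (S : Sig) (c : S.Op) (h : S.arity c = 0) : Tm S :=
  Tm.node c (fun i => absurd i.isLt (by omega))

/-- Height of a ground term (constants have height 0). -/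
def Tm.height {S : Sig} : Tm S → ℕ
  | Tm.node _ a => Finset.univ.sup fun i => (a i).height + 1

/-- The i-th immediate subterm (child of the root of the syntax tree), if it exists. -/
def Tm.child {S : Sig} : Tm S → ℕ → Option (Tm S)
  | Tm.node f a, i => if h : i < S.arity f then some (a ⟨i, h⟩) else none

/-- A total algebra over the signature `S`. -/
structure Alg (S : Sig) where
  carrier : Type
  op : (f : S.Op) → (Fin (S.arity f) → carrier) → carrier

/-- Homomorphism of total algebras. -/
structure Hom {S : Sig} (A B : Alg S) where
  toFun : A.carrier → B.carrier
  map : ∀ (f : S.Op) (a : Fin (S.arity f) → A.carrier),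
    toFun (A.op f a) = B.op f (fun i => toFun (a i))

/-- Evaluation of a ground term in an algebra. -/
def Tm.eval {S : Sig} (A : Alg S) : Tm S → A.carrier
  | Tm.node f a => A.op f (fun i => (a i).eval A)

/-- An algebra is generated by the constants iff every element is the value of a ground term. -/
def GeneratedAlg {S : Sig} (A : Alg S) : Prop :=
  ∀ x : A.carrier, ∃ t : Tm S, t.eval A = x

/-- Isomorphism of total algebras. -/
def AlgIso {S : Sig} (A B : Alg S) : Prop :=
  ∃ h : Hom A B, Function.Bijective h.toFun

/-- Derivability in equational logic from a set `Γ` of ground equations: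
the smallest congruence containing `Γ`. `Thm Γ p q` means `Γ ⊢ p = q`. -/
inductive Thm {S : Sig} (Γ : Set (Tm S × Tm S)) : Tm S → Tm S → Prop
  | ax {p q : Tm S} : (p, q) ∈ Γ → Thm Γ p q
  | refl (t : Tm S) : Thm Γ t t
  | symm {p q : Tm S} : Thm Γ p q → Thm Γ q p
  | trans {p q r : Tm S} : Thm Γ p q → Thm Γ q r → Thm Γ p r
  | congr {f : S.Op} {a b : Fin (S.arity f) → Tm S} :
      (∀ i, Thm Γ (a i) (b i)) → Thm Γ (Tm.node f a) (Tm.node f b)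

/-- The setoid `∼_Γ` on ground terms. -/
def thmSetoid {S : Sig} (Γ : Set (Tm S × Tm S)) : Setoid (Tm S) :=
  ⟨Thm Γ, ⟨fun t => Thm.refl t, fun h => Thm.symm h, fun h₁ h₂ => Thm.trans h₁ h₂⟩⟩

/-- The quotient algebra `F_Γ = F/∼_Γ`. -/
noncomputable def FGamma {S : Sig} (Γ : Set (Tm S × Tm S)) : Alg S where
  carrier := Quotient (thmSetoid Γ)
  op f a := Quotient.mk (thmSetoid Γ) (Tm.node f (fun i => (a i).out))

/-- Single-step ground rewriting: replace a subterm which is one side of an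
equation of `Γ` by the other side. -/
inductive Step {S : Sig} (Γ : Set (Tm S × Tm S)) : Tm S → Tm S → Prop
  | here {p q : Tm S} : (p, q) ∈ Γ ∨ (q, p) ∈ Γ → Step Γ p q
  | sub {f : S.Op} {a b : Fin (S.arity f) → Tm S} (i : Fin (S.arity f)) :
      Step Γ (a i) (b i) → (∀ j, j ≠ i → a j = b j) → Step Γ (Tm.node f a) (Tm.node f b)

/-- Subterm relation on ground terms. -/
inductive Subterm {S : Sig} : Tm S → Tm S → Prop
  | refl (t : Tm S) : Subterm t t
  | step {s : Tm S} {f : S.Op} {a : Fin (S.arity f) → Tm S} (i : Fin (S.arity f)) :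
      Subterm s (a i) → Subterm s (Tm.node f a)

/-- `p` occurs in `Γ` (is one side of an equation of `Γ`). -/
def SideOf {S : Sig} (Γ : Set (Tm S × Tm S)) (p : Tm S) : Prop :=
  ∃ e ∈ Γ, p = e.1 ∨ p = e.2

/-- `ST Γ`: all subterms of terms occurring in `Γ`. -/
def ST {S : Sig} (Γ : Set (Tm S × Tm S)) : Set (Tm S) :=
  {t | ∃ e ∈ Γ, Subterm t e.1 ∨ Subterm t e.2}

/-- A term "has a type" if it is `∼_Γ`-equivalent to a term mentioned in `Γ`. -/
def HasType {S : Sig} (Γ : Set (Tm S × Tm S)) (t : Tm S) : Prop :=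
  ∃ p, SideOf Γ p ∧ Thm Γ t p

/-- `w` is an immediate subterm of `u`. -/
def ImmSub {S : Sig} (w u : Tm S) : Prop :=
  ∃ (f : S.Op) (a : Fin (S.arity f) → Tm S) (i : Fin (S.arity f)), u = Tm.node f a ∧ a i = w

/-- Edge relation of the quotient graph `R̂_Γ`: there is a directed edge from the
class of `u` to the class of `w` iff some `Γ`-subterm-occurrence `u'` equivalent to `u`
has an immediate subterm `w'` equivalent to `w`. -/
def EdgeHat {S : Sig} (Γ : Set (Tm S × Tm S)) (u w : Tm S) : Prop :=
  ∃ u' w', u' ∈ ST Γ ∧ w' ∈ ST Γ ∧ Thm Γ u u' ∧ Thm Γ w w' ∧ ImmSub w' u'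

/-- A directed cycle of `R̂_Γ` is reachable from (the class of) `t` by a directed path. -/
def CyclicFrom {S : Sig} (Γ : Set (Tm S × Tm S)) (t : Tm S) : Prop :=
  ∃ u, Relation.ReflTransGen (EdgeHat Γ) t u ∧ Relation.TransGen (EdgeHat Γ) u u

/-- `t` is of cyclic type: `t` is `∼_Γ`-equivalent to a term mentioned in `Γ`
whose type is cyclic. -/
def OfCyclicType {S : Sig} (Γ : Set (Tm S × Tm S)) (t : Tm S) : Prop :=
  ∃ p, SideOf Γ p ∧ Thm Γ t p ∧ CyclicFrom Γ p

/-- The canonical representative map: given a choice function `r` assigning to each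
typed term the fixed representative of its type, replace each maximal typed subterm
of `t` by the chosen representative. -/
noncomputable def repMap {S : Sig} (Γ : Set (Tm S × Tm S)) (r : Tm S → Tm S) : Tm S → Tm S
  | Tm.node f a =>
      if HasType Γ (Tm.node f a) then r (Tm.node f a)
      else Tm.node f fun i => repMap Γ r (a i)

/-- A partial algebra over `S`. -/
structure PAlg (S : Sig) where
  carrier : Type
  pop : (f : S.Op) → (Fin (S.arity f) → carrier) → Option carrier

/-- An embedding exhibiting the partial algebra `B` as a substructure of the
total algebra `A`. -/
structure PEmb {S : Sig} (B : PAlg S) (A : Alg S) where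
  toFun : B.carrier → A.carrier
  inj : Function.Injective toFun
  map : ∀ (f : S.Op) (b : Fin (S.arity f) → B.carrier) (c : B.carrier),
    B.pop f b = some c → A.op f (fun i => toFun (b i)) = toFun c

/-- `A` is free over the partial algebra `B` (via the substructure embedding `e`):
every (constant-generated) algebra containing `B` as a substructure is a homomorphic
image of `A` via a homomorphism fixing `B` pointwise. -/
def IsFreeOver {S : Sig} (A : Alg S) (B : PAlg S) (e : PEmb B A) : Prop :=
  ∀ (C : Alg S), GeneratedAlg C → ∀ e' : PEmb B C,
    ∃ h : Hom A C, Function.Surjective h.toFun ∧ ∀ b, h.toFun (e.toFun b) = e'.toFun b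

/-- Elements of a partial algebra generated from constants via the defined operations. -/
inductive PGen {S : Sig} (B : PAlg S) : B.carrier → Prop
  | op {f : S.Op} {b : Fin (S.arity f) → B.carrier} {c : B.carrier} :
      (∀ i, PGen B (b i)) → B.pop f b = some c → PGen B c

/-- A partial algebra is generated by the constants. -/
def PGenerated {S : Sig} (B : PAlg S) : Prop := ∀ x, PGen B x

/-- Raw `B`-terms: terms built over elements of the partial algebra `B`. -/
inductive BTm {S : Sig} (B : PAlg S) : Type
  | base (b : B.carrier) : BTm B
  | app (f : S.Op) (args : Fin (S.arity f) → BTm B) : BTm B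

/-- Normal `B`-terms: an application node is allowed only when it cannot be
evaluated in `B`. -/
inductive Normal {S : Sig} {B : PAlg S} : BTm B → Prop
  | base (b : B.carrier) : Normal (BTm.base b)
  | app {f : S.Op} {args : Fin (S.arity f) → BTm B} :
      (∀ i, Normal (args i)) →
      ¬(∃ (b : Fin (S.arity f) → B.carrier) (c : B.carrier),
          (∀ i, args i = BTm.base (b i)) ∧ B.pop f b = some c) →
      Normal (BTm.app f args)

/-- The free total extension `F(B)` of the partial algebra `B`: its elements are
the normal `B`-terms; an operation evaluates in `B` whenever possible, and forms
a formal term otherwise. -/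
noncomputable def FB {S : Sig} (B : PAlg S) : Alg S where
  carrier := {t : BTm B // Normal t}
  op f args :=
    if h : ∃ (b : Fin (S.arity f) → B.carrier) (c : B.carrier),
        (∀ i, (args i).1 = BTm.base (b i)) ∧ B.pop f b = some c
    then ⟨BTm.base h.choose_spec.choose, Normal.base _⟩
    else ⟨BTm.app f (fun i => (args i).1), Normal.app (fun i => (args i).2) h⟩

/-- The canonical inclusion of `B` into `F(B)`. -/
def embB {S : Sig} (B : PAlg S) (b : B.carrier) : (FB B).carrier :=
  ⟨BTm.base b, Normal.base b⟩

/-- Terms with variables. -/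
inductive TmV (S : Sig) : Type
  | var (n : ℕ) : TmV S
  | node (f : S.Op) (args : Fin (S.arity f) → TmV S) : TmV S

/-- Ground substitution into a term with variables. -/
def TmV.substG {S : Sig} (ρ : ℕ → Tm S) : TmV S → Tm S
  | TmV.var n => ρ n
  | TmV.node f a => Tm.node f (fun i => (a i).substG ρ)

/-- Evaluation of a term with variables under an assignment. -/
def TmV.evalV {S : Sig} (A : Alg S) (ρ : ℕ → A.carrier) : TmV S → A.carrier
  | TmV.var n => ρ n
  | TmV.node f a => A.op f (fun i => (a i).evalV A ρ)

/-- All ground instances of a set of (possibly non-ground) equations. -/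
def GroundInstances {S : Sig} (Γ : Set (TmV S × TmV S)) : Set (Tm S × Tm S) :=
  {pq | ∃ e ∈ Γ, ∃ ρ : ℕ → Tm S, pq.1 = e.1.substG ρ ∧ pq.2 = e.2.substG ρ}

/-- `A ⊨ Γ` for a set of (possibly non-ground) equations. -/
def SatV {S : Sig} (A : Alg S) (Γ : Set (TmV S × TmV S)) : Prop :=
  ∀ e ∈ Γ, ∀ ρ : ℕ → A.carrier, TmV.evalV A ρ e.1 = TmV.evalV A ρ e.2

/-- The finite partial algebra of `∼_Γ`-classes containing a term of height `≤ N`. -/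
noncomputable def heightPAlg {S : Sig} (Γ : Set (Tm S × Tm S)) (N : ℕ) : PAlg S where
  carrier := {x : Quotient (thmSetoid Γ) //
    ∃ t : Tm S, t.height ≤ N ∧ Quotient.mk (thmSetoid Γ) t = x}
  pop f b :=
    if h : ∃ t : Tm S, t.height ≤ N ∧
        Quotient.mk (thmSetoid Γ) t =
          Quotient.mk (thmSetoid Γ) (Tm.node f (fun i => (b i).1.out))
    then some ⟨Quotient.mk (thmSetoid Γ) (Tm.node f (fun i => (b i).1.out)), h⟩
    else none

/-- The set `B = C ∪ ST(Γ₁ ∪ Γ₂)`. -/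
def BSet {S : Sig} (Γ₁ Γ₂ : Set (Tm S × Tm S)) : Set (Tm S) :=
  {t | (∃ (c : S.Op) (h : S.arity c = 0), t = constTm S c h) ∨ t ∈ ST (Γ₁ ∪ Γ₂)}

/-- The partial algebra induced by `Γ` on the `∼_Γ`-classes of terms of `Bs`:
`f` applied to classes is defined iff the class of the resulting term again
contains a term of `Bs`. -/
noncomputable def BAlg {S : Sig} (Γ : Set (Tm S × Tm S)) (Bs : Set (Tm S)) : PAlg S where
  carrier := Quotient (Setoid.comap (Subtype.val : Bs → Tm S) (thmSetoid Γ))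
  pop f b :=
    if h : ∃ u : Bs, Thm Γ u.1 (Tm.node f (fun i => ((b i).out).1))
    then some (Quotient.mk (Setoid.comap (Subtype.val : Bs → Tm S) (thmSetoid Γ)) h.choose)
    else none

/-- The class of `t ∈ Bs` as an element of `BAlg Γ Bs`. -/
noncomputable def BAlgMk {S : Sig} (Γ : Set (Tm S × Tm S)) (Bs : Set (Tm S))
    (t : Tm S) (ht : t ∈ Bs) : (BAlg Γ Bs).carrier :=
  Quotient.mk (Setoid.comap (Subtype.val : Bs → Tm S) (thmSetoid Γ)) ⟨t, ht⟩

/-- Isomorphism of partial algebras: a bijection preserving definedness and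
values of the partial operations in both directions. -/
def PIso {S : Sig} (B₁ B₂ : PAlg S) : Prop :=
  ∃ e : B₁.carrier ≃ B₂.carrier,
    ∀ (f : S.Op) (b : Fin (S.arity f) → B₁.carrier),
      Option.map e (B₁.pop f b) = B₂.pop f (fun i => e (b i))

/-- The algebra structure on `∼_Γ`-classes of `ST(Γ)`, defined via the closure
hypothesis `hf`. -/
noncomputable def STAlg {S : Sig} (Γ : Set (Tm S × Tm S))
    (hf : ∀ (f : S.Op) (a : Fin (S.arity f) → Tm S), (∀ i, a i ∈ ST Γ) →
      ∃ u ∈ ST Γ, Thm Γ (Tm.node f a) u) : Alg S where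
  carrier := Quotient (Setoid.comap (Subtype.val : ST Γ → Tm S) (thmSetoid Γ))
  op f a :=
    let h := hf f (fun i => ((a i).out).1) (fun i => ((a i).out).2)
    Quotient.mk (Setoid.comap (Subtype.val : ST Γ → Tm S) (thmSetoid Γ))
      ⟨h.choose, h.choose_spec.1⟩

/-- The map `φ : F → ST(Γ)` defined inductively by choosing, at each application,
a `∼_Γ`-equivalent member of `ST(Γ)`. -/
noncomputable def phiST {S : Sig} (Γ : Set (Tm S × Tm S))
    (hf : ∀ (f : S.Op) (a : Fin (S.arity f) → Tm S), (∀ i, a i ∈ ST Γ) →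
      ∃ u ∈ ST Γ, Thm Γ (Tm.node f a) u) : Tm S → {u : Tm S // u ∈ ST Γ}
  | Tm.node f a =>
      let ih := fun i => phiST Γ hf (a i)
      let h := hf f (fun i => (ih i).1) (fun i => (ih i).2)
      ⟨h.choose, h.choose_spec.1⟩

/-- The tester predicate `Is_f` on `F(B)`: holds of `a` iff `a ∉ B` and `a` is a
formal term with head symbol `f`. -/
def IsTester {S : Sig} {B : PAlg S} (f : S.Op) (a : (FB B).carrier) : Prop :=
  ∃ args : Fin (S.arity f) → BTm B, a.1 = BTm.app f args


/-!
Pumping around a cycle of `R̂_Γ` reachable from the type of a constant `c` yields terms of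
unbounded height in the class of `c`, and since every ground term contains a constant, every
class then contains terms of unbounded height.

Conversely, a derivation `t ∼_Γ p` can change the root of `t` only by passing through a side of
`Γ` with the same root symbol, so the arguments of `t` are equivalent to children of a node of
`ST Γ` of the type of `p`. If no cycle is reachable from `p`, the number of classes reachable
from `p` strictly decreases along edges, which bounds the height of `t`; over a finite signature
the class of `p` is then finite. A constant of no type is alone in its class.
-/

section Terms

variable {S : Sig}

lemma Tm.height_node (f : S.Op) (a : Fin (S.arity f) → Tm S) :
    (Tm.node f a).height = Finset.univ.sup fun i => (a i).height + 1 := rfl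

lemma Tm.height_lt_height_node (f : S.Op) (a : Fin (S.arity f) → Tm S) (i : Fin (S.arity f)) :
    (a i).height < (Tm.node f a).height :=
  Finset.le_sup (f := fun i => (a i).height + 1) (Finset.mem_univ i)

lemma Tm.finite_setOf_height_lt [Finite S.Op] (N : ℕ) : {t : Tm S | t.height < N}.Finite := by
  induction N with
  | zero => simp
  | succ N ih =>
    have := ih.to_subtype
    refine (Set.finite_range fun x : Σ f : S.Op, Fin (S.arity f) → {t : Tm S | t.height < N} =>
      Tm.node x.1 fun i => (x.2 i).1).subset ?_
    rintro ⟨f, a⟩ ht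
    refine ⟨⟨f, fun i => ⟨a i, ?_⟩⟩, rfl⟩
    have := Tm.height_lt_height_node f a i
    simp only [Set.mem_ofPred_eq] at ht ⊢
    omega

lemma constTm_eq_node {c : S.Op} (h : S.arity c = 0) (a : Fin (S.arity c) → Tm S) :
    constTm S c h = Tm.node c a := by
  unfold constTm
  congr 1
  funext i
  exact absurd i.isLt (by omega)

lemma Subterm.trans {s t u : Tm S} (h₁ : Subterm s t) (h₂ : Subterm t u) : Subterm s u := by
  induction h₂ with
  | refl => exact h₁
  | step i _ ih => exact Subterm.step i ih

lemma finite_setOf_subterm (u : Tm S) : {t : Tm S | Subterm t u}.Finite := by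
  induction u with
  | node f a ih =>
    refine ((Set.finite_iUnion ih).insert (Tm.node f a)).subset ?_
    intro t ht
    cases ht with
    | refl => exact Set.mem_insert _ _
    | step i h => exact Set.mem_insert_of_mem _ (Set.mem_iUnion.2 ⟨i, h⟩)

lemma exists_constTm_subterm (t : Tm S) :
    ∃ (c : S.Op) (h : S.arity c = 0), Subterm (constTm S c h) t := by
  induction t with
  | node f a ih =>
    by_cases h0 : S.arity f = 0
    · exact ⟨f, h0, constTm_eq_node h0 a ▸ Subterm.refl _⟩
    · obtain ⟨c, hc, hsub⟩ := ih ⟨0, Nat.pos_of_ne_zero h0⟩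
      exact ⟨c, hc, Subterm.step _ hsub⟩

end Terms

section Congruence

variable {S : Sig} {Γ : Set (Tm S × Tm S)}

lemma setOf_thm_eq {t p : Tm S} (h : Thm Γ t p) : {s | Thm Γ t s} = {s | Thm Γ p s} :=
  Set.ext fun _ => ⟨h.symm.trans, h.trans⟩

lemma Thm.exists_node_height_gt {f : S.Op} {a : Fin (S.arity f) → Tm S} {i : Fin (S.arity f)}
    {s : Tm S} (h : Thm Γ (a i) s) : ∃ s', Thm Γ (Tm.node f a) s' ∧ s.height < s'.height := by
  refine ⟨Tm.node f (Function.update a i s), Thm.congr fun j => ?_, ?_⟩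
  · rcases eq_or_ne j i with rfl | hj
    · rwa [Function.update_self]
    · rw [Function.update_of_ne hj]
      exact Thm.refl _
  · simpa using Tm.height_lt_height_node f (Function.update a i s) i

def RootEquiv (Γ : Set (Tm S × Tm S)) (t s : Tm S) : Prop :=
  ∃ f a b, t = Tm.node f a ∧ s = Tm.node f b ∧ ∀ i, Thm Γ (a i) (b i)

def RootAnchored (Γ : Set (Tm S × Tm S)) (t : Tm S) : Prop :=
  ∃ f a b, t = Tm.node f a ∧ SideOf Γ (Tm.node f b) ∧ ∀ i, Thm Γ (a i) (b i)

lemma RootEquiv.symm {t s : Tm S} (h : RootEquiv Γ t s) : RootEquiv Γ s t := by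
  obtain ⟨f, a, b, rfl, rfl, hab⟩ := h
  exact ⟨f, b, a, rfl, rfl, fun i => (hab i).symm⟩

lemma RootEquiv.trans {t s r : Tm S} (h₁ : RootEquiv Γ t s) (h₂ : RootEquiv Γ s r) :
    RootEquiv Γ t r := by
  obtain ⟨f, a, b, rfl, rfl, hab⟩ := h₁
  obtain ⟨g, b', c, hb, rfl, hbc⟩ := h₂
  cases hb
  exact ⟨f, a, c, rfl, rfl, fun i => (hab i).trans (hbc i)⟩

lemma RootAnchored.of_rootEquiv {t s : Tm S} (hs : RootAnchored Γ s) (h : RootEquiv Γ t s) :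
    RootAnchored Γ t := by
  obtain ⟨f, a, b, rfl, rfl, hab⟩ := h
  obtain ⟨g, b', c, hb, hside, hbc⟩ := hs
  cases hb
  exact ⟨f, a, c, rfl, hside, fun i => (hab i).trans (hbc i)⟩

lemma Thm.rootEquiv_or_rootAnchored {t s : Tm S} (h : Thm Γ t s) :
    RootEquiv Γ t s ∨ RootAnchored Γ t ∧ RootAnchored Γ s := by
  induction h with
  | @ax p q hpq =>
    obtain ⟨f, a⟩ := p
    obtain ⟨g, b⟩ := q
    exact Or.inr ⟨⟨f, a, a, rfl, ⟨_, hpq, Or.inl rfl⟩, fun _ => Thm.refl _⟩,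
      ⟨g, b, b, rfl, ⟨_, hpq, Or.inr rfl⟩, fun _ => Thm.refl _⟩⟩
  | refl t =>
    obtain ⟨f, a⟩ := t
    exact Or.inl ⟨f, a, a, rfl, rfl, fun _ => Thm.refl _⟩
  | symm _ ih => exact ih.imp RootEquiv.symm And.symm
  | trans _ _ ih₁ ih₂ =>
    rcases ih₁ with h₁ | ⟨ht, hs⟩ <;> rcases ih₂ with h₂ | ⟨hs', hr⟩
    · exact Or.inl (h₁.trans h₂)
    · exact Or.inr ⟨hs'.of_rootEquiv h₁, hr⟩
    · exact Or.inr ⟨ht, hs.of_rootEquiv h₂.symm⟩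
    · exact Or.inr ⟨ht, hr⟩
  | @congr f a b hab => exact Or.inl ⟨f, a, b, rfl, rfl, hab⟩

lemma Thm.exists_root {f : S.Op} {a : Fin (S.arity f) → Tm S} {s : Tm S}
    (h : Thm Γ (Tm.node f a) s) :
    ∃ b : Fin (S.arity f) → Tm S, (∀ i, Thm Γ (a i) (b i)) ∧
      (s = Tm.node f b ∨ SideOf Γ (Tm.node f b)) := by
  rcases h.rootEquiv_or_rootAnchored with ⟨g, a', b, ht, rfl, hab⟩ | ⟨⟨g, a', b, ht, hside, hab⟩, -⟩
  · cases ht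
    exact ⟨b, hab, Or.inl rfl⟩
  · cases ht
    exact ⟨b, hab, Or.inr hside⟩

lemma setOf_thm_constTm_of_not_hasType {c : S.Op} {h : S.arity c = 0}
    (hty : ¬ HasType Γ (constTm S c h)) : {s | Thm Γ (constTm S c h) s} = {constTm S c h} := by
  refine Set.ext fun s => ⟨fun hs => ?_, fun hs => hs ▸ Thm.refl _⟩
  obtain ⟨b, -, rfl | hside⟩ := Thm.exists_root (f := c) hs
  · exact (constTm_eq_node h b).symm
  · exact absurd ⟨_, hside, constTm_eq_node h b ▸ Thm.refl _⟩ hty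

end Congruence

section Graph

variable {S : Sig} {Γ : Set (Tm S × Tm S)}

lemma SideOf.mem_ST {p : Tm S} (h : SideOf Γ p) : p ∈ ST Γ := by
  obtain ⟨e, he, rfl | rfl⟩ := h
  · exact ⟨e, he, Or.inl (Subterm.refl _)⟩
  · exact ⟨e, he, Or.inr (Subterm.refl _)⟩

lemma mem_ST_of_subterm {s p : Tm S} (hs : Subterm s p) (hp : p ∈ ST Γ) : s ∈ ST Γ := by
  obtain ⟨e, he, h⟩ := hp
  exact ⟨e, he, h.imp hs.trans hs.trans⟩

lemma finite_ST (hΓ : Γ.Finite) : (ST Γ).Finite :=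
  (hΓ.biUnion fun e _ => (finite_setOf_subterm e.1).union (finite_setOf_subterm e.2)).subset
    fun _ ⟨_, he, h⟩ => Set.mem_biUnion he h

lemma EdgeHat.congr {u u₂ w w₂ : Tm S} (h : EdgeHat Γ u w) (hu : Thm Γ u u₂)
    (hw : Thm Γ w w₂) : EdgeHat Γ u₂ w₂ := by
  obtain ⟨u', w', hu', hw', huu', hww', himm⟩ := h
  exact ⟨u', w', hu', hw', hu.symm.trans huu', hw.symm.trans hww', himm⟩

lemma EdgeHat.exists_mem_ST {u w : Tm S} (h : EdgeHat Γ u w) : ∃ w' ∈ ST Γ, Thm Γ w w' := by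
  obtain ⟨-, w', -, hw', -, hww', -⟩ := h
  exact ⟨w', hw', hww'⟩

lemma transGen_edgeHat_congr_right {u v v' : Tm S} (h : Relation.TransGen (EdgeHat Γ) u v)
    (hv : Thm Γ v v') : Relation.TransGen (EdgeHat Γ) u v' := by
  obtain ⟨c, huc, hcv⟩ := Relation.TransGen.tail'_iff.1 h
  exact Relation.TransGen.tail' huc (hcv.congr (Thm.refl c) hv)

lemma not_cyclicFrom_of_edgeHat {p w : Tm S} (hp : ¬ CyclicFrom Γ p) (h : EdgeHat Γ p w) :
    ¬ CyclicFrom Γ w :=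
  fun ⟨u, hwu, huu⟩ => hp ⟨u, Relation.ReflTransGen.head h hwu, huu⟩

def reachSet (Γ : Set (Tm S × Tm S)) (p : Tm S) : Set (Quotient (thmSetoid Γ)) :=
  Quotient.mk _ '' {w | Relation.ReflTransGen (EdgeHat Γ) p w}

noncomputable def rank (Γ : Set (Tm S × Tm S)) (p : Tm S) : ℕ := (reachSet Γ p).ncard

lemma finite_reachSet (hΓ : Γ.Finite) (p : Tm S) : (reachSet Γ p).Finite := by
  refine (((finite_ST hΓ).image (Quotient.mk _)).insert (Quotient.mk _ p)).subset ?_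
  rintro _ ⟨w, hw, rfl⟩
  rcases hw.cases_tail with rfl | ⟨c, -, hcw⟩
  · exact Set.mem_insert _ _
  · obtain ⟨w', hw', hww'⟩ := hcw.exists_mem_ST
    exact Set.mem_insert_of_mem _ ⟨w', hw', Quotient.sound hww'.symm⟩

lemma rank_pos (hΓ : Γ.Finite) (p : Tm S) : 0 < rank Γ p :=
  (Set.ncard_pos (finite_reachSet hΓ p)).2 ⟨_, p, Relation.ReflTransGen.refl, rfl⟩

/-- Away from cycles, reachability is strict: the class of `p` is not reachable from `w`. -/
lemma rank_lt_of_edgeHat (hΓ : Γ.Finite) {p w : Tm S} (hp : ¬ CyclicFrom Γ p)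
    (h : EdgeHat Γ p w) : rank Γ w < rank Γ p := by
  have hsub : reachSet Γ w ⊆ reachSet Γ p :=
    Set.image_mono fun _ hv => Relation.ReflTransGen.head h hv
  have hp_not_mem : Quotient.mk _ p ∉ reachSet Γ w := by
    rintro ⟨w₂, hw₂, heq⟩
    exact hp ⟨p, Relation.ReflTransGen.refl,
      transGen_edgeHat_congr_right (Relation.TransGen.head' h hw₂) (Quotient.exact heq)⟩
  exact Set.ncard_lt_ncard ⟨hsub, fun hps => hp_not_mem (hps ⟨p, .refl, rfl⟩)⟩
    (finite_reachSet hΓ p)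

lemma height_lt_rank (hΓ : Γ.Finite) {t p : Tm S} (hp : p ∈ ST Γ) (hnc : ¬ CyclicFrom Γ p)
    (h : Thm Γ t p) : t.height < rank Γ p := by
  induction t generalizing p with
  | node f a ih =>
    obtain ⟨b, hab, hroot⟩ := h.exists_root
    have hb : Tm.node f b ∈ ST Γ := by
      rcases hroot with rfl | hside
      · exact hp
      · exact hside.mem_ST
    have hbi (i : Fin (S.arity f)) : b i ∈ ST Γ :=
      mem_ST_of_subterm (Subterm.step i (Subterm.refl _)) hb
    have hedge (i : Fin (S.arity f)) : EdgeHat Γ p (b i) :=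
      ⟨Tm.node f b, b i, hb, hbi i, h.symm.trans (Thm.congr hab), Thm.refl _, f, b, i, rfl, rfl⟩
    rw [Tm.height_node, Finset.sup_lt_iff (rank_pos hΓ p)]
    intro i _
    have := ih i (hbi i) (not_cyclicFrom_of_edgeHat hnc (hedge i)) (hab i)
    have := rank_lt_of_edgeHat hΓ hnc (hedge i)
    omega

lemma finite_setOf_thm_of_not_cyclicFrom [Finite S.Op] (hΓ : Γ.Finite) {p : Tm S}
    (hp : p ∈ ST Γ) (hnc : ¬ CyclicFrom Γ p) : {s | Thm Γ p s}.Finite :=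
  (Tm.finite_setOf_height_lt (rank Γ p)).subset fun _ hs => height_lt_rank hΓ hp hnc hs.symm

end Graph

section Pumping

variable {S : Sig} {Γ : Set (Tm S × Tm S)}

def HeightUnbounded (Γ : Set (Tm S × Tm S)) (t : Tm S) : Prop :=
  ∀ n : ℕ, ∃ s, Thm Γ t s ∧ n ≤ s.height

lemma EdgeHat.exists_height_gt {u w s : Tm S} (h : EdgeHat Γ u w) (hs : Thm Γ w s) :
    ∃ s', Thm Γ u s' ∧ s.height < s'.height := by
  obtain ⟨-, -, -, -, huu', hww', f, a, i, rfl, rfl⟩ := h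
  obtain ⟨s', hs', hlt⟩ := Thm.exists_node_height_gt (f := f) (hww'.symm.trans hs)
  exact ⟨s', huu'.trans hs', hlt⟩

lemma exists_height_gt_of_transGen {u v s : Tm S} (h : Relation.TransGen (EdgeHat Γ) u v)
    (hs : Thm Γ v s) : ∃ s', Thm Γ u s' ∧ s.height < s'.height := by
  induction h generalizing s with
  | single h => exact h.exists_height_gt hs
  | tail _ h ih =>
    obtain ⟨s₁, hs₁, hlt₁⟩ := h.exists_height_gt hs
    obtain ⟨s', hs', hlt⟩ := ih hs₁
    exact ⟨s', hs', hlt₁.trans hlt⟩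

lemma CyclicFrom.heightUnbounded {p : Tm S} (h : CyclicFrom Γ p) : HeightUnbounded Γ p := by
  obtain ⟨u, hpu, huu⟩ := h
  have hu : HeightUnbounded Γ u := by
    intro n
    induction n with
    | zero => exact ⟨u, Thm.refl u, Nat.zero_le _⟩
    | succ n ih =>
      obtain ⟨s, hs, hn⟩ := ih
      obtain ⟨s', hs', hlt⟩ := exists_height_gt_of_transGen huu hs
      exact ⟨s', hs', hn.trans_lt hlt⟩
  intro n
  obtain ⟨s, hs, hn⟩ := hu n
  obtain ⟨s', hs', hlt⟩ := exists_height_gt_of_transGen (Relation.TransGen.trans_right hpu huu) hs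
  exact ⟨s', hs', hn.trans hlt.le⟩

lemma HeightUnbounded.of_thm {t p : Tm S} (hp : HeightUnbounded Γ p) (h : Thm Γ t p) :
    HeightUnbounded Γ t :=
  fun n => (hp n).imp fun _ ⟨hs, hn⟩ => ⟨h.trans hs, hn⟩

lemma HeightUnbounded.of_subterm {s t : Tm S} (hs : HeightUnbounded Γ s) (h : Subterm s t) :
    HeightUnbounded Γ t := by
  induction h with
  | refl => exact hs
  | step i _ ih =>
    intro n
    obtain ⟨y, hy, hn⟩ := ih n
    obtain ⟨y', hy', hlt⟩ := Thm.exists_node_height_gt hy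
    exact ⟨y', hy', hn.trans hlt.le⟩

lemma HeightUnbounded.infinite {t : Tm S} (h : HeightUnbounded Γ t) :
    {s | Thm Γ t s}.Infinite := by
  refine Set.Infinite.of_image Tm.height (Set.infinite_of_not_bddAbove ?_)
  rintro ⟨N, hN⟩
  obtain ⟨s, hs, hn⟩ := h (N + 1)
  have := hN ⟨s, hs, rfl⟩
  omega

end Pumping

/-- Every `∼_Γ`-congruence class of ground terms is infinite iff every
constant symbol of `Σ` is of cyclic type. -/
theorem stmt9 (S : Sig) [Fintype S.Op] (Γ : Set (Tm S × Tm S)) (hΓ : Γ.Finite) :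
    (∀ t : Tm S, {s | Thm Γ t s}.Infinite) ↔
    (∀ (c : S.Op) (h : S.arity c = 0), OfCyclicType Γ (constTm S c h)) := by
  constructor
  · intro hinf c hc
    by_contra hnc
    by_cases hty : HasType Γ (constTm S c hc)
    · obtain ⟨p, hp, hcp⟩ := hty
      have hfin := finite_setOf_thm_of_not_cyclicFrom hΓ hp.mem_ST fun hcyc => hnc ⟨p, hp, hcp, hcyc⟩
      exact hinf _ (by rwa [setOf_thm_eq hcp])
    · exact hinf _ (setOf_thm_constTm_of_not_hasType hty ▸ Set.finite_singleton _)
  · intro hcyc t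
    obtain ⟨c, hc, hsub⟩ := exists_constTm_subterm t
    obtain ⟨p, -, hcp, hp⟩ := hcyc c hc
    exact ((hp.heightUnbounded.of_thm hcp).of_subterm hsub).infinite

end AFA
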